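/- arXiv:1708.06182 — 2 statements merged into one kernel-verified Lean document; each statement's English description precedes it below -/
import Mathlib

section
/- Let w be analytic on the open unit disk, and let z₁ on the unit circle be a point such that lim_{z→z₁} w(z) exists and is finite (from within the disk). Then the angular primitive w^{−1•}(z) = −i·∫₀^z (w(z') − w(0))/z' dz' also has a finite limit as z → z₁ from within the open unit disk. (Soft singularities are preserved by angular integration.) -/
/-! Since `z₁ ≠ 0`, the derivative `-i (w z - w 0) / z` of `W` converges as `z → z₁` inside the
disk, so it is bounded on `ball 0 1 ∩ ball z₁ r` for some `r > 0`. This set is convex, so by the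
mean value inequality `W` is Lipschitz, hence uniformly continuous, on it, and a uniformly
continuous map into the complete space `ℂ` has a limit within its set at every point. -/

open Metric Complex Filter Topology

theorem UniformContinuousOn.exists_tendsto_nhdsWithin {α β : Type*} [UniformSpace α]
    [UniformSpace β] [CompleteSpace β] {f : α → β} {s : Set α} (hf : UniformContinuousOn f s)
    (x : α) : ∃ y, Tendsto f (𝓝[s] x) (𝓝 y) := by
  rcases (𝓝[s] x).eq_or_neBot with hbot | hne
  · exact ⟨f x, hbot ▸ tendsto_bot⟩
  · exact cauchy_map_iff_exists_tendsto.mp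
      ((cauchy_nhds.mono nhdsWithin_le_nhds).map_of_le hf inf_le_right)

theorem Convex.exists_tendsto_nhdsWithin_of_hasDerivWithinAt {𝕜 E : Type*} [RCLike 𝕜]
    [NormedAddCommGroup E] [NormedSpace 𝕜 E] [CompleteSpace E] {f f' : 𝕜 → E} {s : Set 𝕜}
    (hs : Convex ℝ s) (hf : ∀ z ∈ s, HasDerivWithinAt f (f' z) s z) {x : 𝕜}
    (hf' : IsBoundedUnder (· ≤ ·) (𝓝[s] x) (‖f' ·‖)) : ∃ y, Tendsto f (𝓝[s] x) (𝓝 y) := by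
  obtain ⟨C, hC⟩ := hf'
  obtain ⟨r, hr, hball⟩ := Metric.mem_nhdsWithin_iff.mp (eventually_map.mp hC)
  have hlip : LipschitzOnWith C.toNNReal f (s ∩ ball x r) :=
    (hs.inter (convex_ball x r)).lipschitzOnWith_of_nnnorm_hasDerivWithin_le
      (fun z hz ↦ (hf z hz.1).mono Set.inter_subset_left) fun z hz ↦ by
        rw [← NNReal.coe_le_coe, coe_nnnorm]
        exact (hball ⟨hz.2, hz.1⟩).trans (Real.le_coe_toNNReal C)
  rw [nhdsWithin_restrict' s (ball_mem_nhds x hr)]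
  exact hlip.uniformContinuousOn.exists_tendsto_nhdsWithin x

noncomputable def angularIntegrand (w : ℂ → ℂ) (z : ℂ) : ℂ :=
  -I * (if z = 0 then deriv w 0 else (w z - w 0) / z)

theorem tendsto_angularIntegrand {w : ℂ → ℂ} {s : Set ℂ} {z₁ L : ℂ} (hz₁ : z₁ ≠ 0)
    (hw : Tendsto w (𝓝[s] z₁) (𝓝 L)) :
    Tendsto (angularIntegrand w) (𝓝[s] z₁) (𝓝 (-I * ((L - w 0) / z₁))) := by
  have hne : ∀ᶠ z in 𝓝[s] z₁, z ≠ 0 :=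
    eventually_nhdsWithin_of_eventually_nhds (eventually_ne_nhds hz₁)
  refine Tendsto.congr' (hne.mono fun z hz ↦ ?_)
    (((hw.sub_const (w 0)).div (tendsto_nhdsWithin_of_tendsto_nhds tendsto_id) hz₁).const_mul (-I))
  simp [angularIntegrand, hz]

theorem angular_primitive_soft_singularity_general (w : ℂ → ℂ)
    (z₁ : ℂ) (hz₁ : ‖z₁‖ = 1) (L : ℂ)
    (hlim : Filter.Tendsto w (nhdsWithin z₁ (ball (0 : ℂ) 1)) (nhds L))
    (W : ℂ → ℂ)
    (hW : ∀ z ∈ ball (0 : ℂ) 1,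
      HasDerivAt W (-I * (if z = 0 then deriv w 0 else (w z - w 0) / z)) z) :
    ∃ L' : ℂ, Filter.Tendsto W (nhdsWithin z₁ (ball (0 : ℂ) 1)) (nhds L') := by
  have hz₁0 : z₁ ≠ 0 := norm_ne_zero_iff.mp (hz₁ ▸ one_ne_zero)
  exact (convex_ball 0 1).exists_tendsto_nhdsWithin_of_hasDerivWithinAt
    (f' := angularIntegrand w) (fun z hz ↦ (hW z hz).hasDerivWithinAt)
    (tendsto_angularIntegrand hz₁0 hlim).norm.isBoundedUnder_le

/-- Soft singularities are preserved by angular integration: if `w`, analytic on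
the open unit disk, has a finite limit at a boundary point `z₁` from within the
disk, then its angular primitive `W` (characterized by `W 0 = 0` and
`W'(z) = -i·(w z - w 0)/z`, the integrand extended by continuity at `0`) also
has a finite limit at `z₁` from within the disk. -/
theorem angular_primitive_soft_singularity (w : ℂ → ℂ)
    (hw : DifferentiableOn ℂ w (ball (0 : ℂ) 1))
    (z₁ : ℂ) (hz₁ : ‖z₁‖ = 1) (L : ℂ)
    (hlim : Filter.Tendsto w (nhdsWithin z₁ (ball (0 : ℂ) 1)) (nhds L))
    (W : ℂ → ℂ) (hW0 : W 0 = 0)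
    (hW : ∀ z ∈ ball (0 : ℂ) 1,
      HasDerivAt W (-I * (if z = 0 then deriv w 0 else (w z - w 0) / z)) z) :
    ∃ L' : ℂ, Filter.Tendsto W (nhdsWithin z₁ (ball (0 : ℂ) 1)) (nhds L') :=
  angular_primitive_soft_singularity_general w z₁ hz₁ L hlim W hW
end

section
/- Let w be analytic on the open unit disk, and let z₁ on the unit circle be such that w has no finite limit at z₁ from within the disk (a 'hard singularity'). Then the angular derivative w•(z) = i·z·w'(z) also has no finite limit at z₁ from within the disk. -/
open Metric Complex Filter Topology

/-! A derivative bounded near a boundary point makes the function Lipschitz on a convex piece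
of the domain near that point, hence Cauchy there, so it has a limit. If the angular derivative
`i z w'(z)` had a limit at `z₁ ≠ 0`, then `w'` would have one too, and in particular be bounded
near `z₁`; so `w` would have a limit at `z₁`. -/

theorem Filter.Tendsto.of_tendsto_mul {α 𝕜 : Type*} [NormedField 𝕜] {l : Filter α}
    {f g : α → 𝕜} {a b : 𝕜} (hfg : Tendsto (fun x => f x * g x) l (𝓝 b))
    (hf : Tendsto f l (𝓝 a)) (ha : a ≠ 0) : Tendsto g l (𝓝 (b / a)) :=
  (hfg.div hf ha).congr' <| (hf.eventually_ne ha).mono fun _ hx => mul_div_cancel_left₀ _ hx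

theorem UniformContinuousOn.exists_tendsto {α β : Type*} [UniformSpace α] [UniformSpace β]
    [CompleteSpace β] {f : α → β} {t : Set α} {l : Filter α} {x : α}
    (hf : UniformContinuousOn f t) (ht : t ∈ l) (hl : l ≤ 𝓝 x) :
    ∃ L, Tendsto f l (𝓝 L) := by
  rcases l.eq_or_neBot with rfl | hne
  · exact ⟨f x, tendsto_bot⟩
  · exact cauchy_map_iff_exists_tendsto.mp
      ((cauchy_nhds.mono hl).map_of_le hf (le_principal_iff.mpr ht))

theorem Convex.exists_tendsto_nhdsWithin_of_isBoundedUnder_deriv {𝕜 G : Type*} [RCLike 𝕜]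
    [NormedAddCommGroup G] [NormedSpace 𝕜 G] [CompleteSpace G] {f : 𝕜 → G} {s : Set 𝕜}
    {x : 𝕜} (hs : Convex ℝ s) (hso : IsOpen s) (hf : DifferentiableOn 𝕜 f s)
    (hbdd : IsBoundedUnder (· ≤ ·) (𝓝[s] x) (fun z => ‖deriv f z‖₊)) :
    ∃ L, Tendsto f (𝓝[s] x) (𝓝 L) := by
  obtain ⟨C, hC⟩ := hbdd
  obtain ⟨ε, hε, hbound⟩ := Metric.mem_nhdsWithin_iff.mp (eventually_map.mp hC)
  have hlip : LipschitzOnWith C f (s ∩ ball x ε) :=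
    (hs.inter (convex_ball x ε)).lipschitzOnWith_of_nnnorm_deriv_le
      (fun z hz => hf.differentiableAt (hso.mem_nhds hz.1)) fun z hz => hbound ⟨hz.2, hz.1⟩
  exact hlip.uniformContinuousOn.exists_tendsto (inter_mem_nhdsWithin s (ball_mem_nhds x hε))
    nhdsWithin_le_nhds

/-- Hard singularities are preserved by angular differentiation: if `w`, analytic
on the open unit disk, has no finite limit at a boundary point `z₁` from within
the disk, then neither does its angular derivative `i·z·w'(z)`. -/
theorem angular_derivative_hard_singularity (w : ℂ → ℂ)
    (hw : DifferentiableOn ℂ w (ball (0 : ℂ) 1))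
    (z₁ : ℂ) (hz₁ : ‖z₁‖ = 1)
    (hhard : ¬ ∃ L : ℂ, Filter.Tendsto w (nhdsWithin z₁ (ball (0 : ℂ) 1)) (nhds L)) :
    ¬ ∃ L : ℂ, Filter.Tendsto (fun z => I * z * deriv w z)
        (nhdsWithin z₁ (ball (0 : ℂ) 1)) (nhds L) := by
  rintro ⟨L, hL⟩
  have hz₁0 : z₁ ≠ 0 := norm_ne_zero_iff.mp (by rw [hz₁]; exact one_ne_zero)
  have hIz : Tendsto (fun z => I * z) (𝓝[ball 0 1] z₁) (𝓝 (I * z₁)) :=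
    ((continuous_const.mul continuous_id).tendsto z₁).mono_left nhdsWithin_le_nhds
  have hderiv := hL.of_tendsto_mul hIz (mul_ne_zero I_ne_zero hz₁0)
  exact hhard <| (convex_ball 0 1).exists_tendsto_nhdsWithin_of_isBoundedUnder_deriv isOpen_ball
    hw hderiv.nnnorm.isBoundedUnder_le
end
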